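/- Let Z and W be Zinbiel algebras and (⇀, ↼, ω) a crossed system of W by Z (satisfying conditions (CS1)–(CS7)). Then the crossed product Z #_ω W fits into a short exact sequence 0 → Z → Z #_ω W → W → 0 of Zinbiel algebras: the map i(x) = (x,0) is a Zinbiel algebra homomorphism, Z×{0} is a two-sided ideal of Z #_ω W, and the projection π(x,u) = u is a surjective Zinbiel algebra homomorphism with kernel Z×{0}. -/
import Mathlib


/-- The crossed product multiplication on `Z ⊕ W`. -/
def cMul {k Z W : Type*} [CommRing k] [AddCommGroup Z] [Module k Z]
    [AddCommGroup W] [Module k W]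
    (m : Z →ₗ[k] Z →ₗ[k] Z) (mW : W →ₗ[k] W →ₗ[k] W)
    (pl : Z →ₗ[k] W →ₗ[k] Z) (pr : W →ₗ[k] Z →ₗ[k] Z)
    (ω : W →ₗ[k] W →ₗ[k] Z)
    (a b : Z × W) : Z × W :=
  (m a.1 b.1 + pl a.1 b.2 + pr a.2 b.1 + ω a.2 b.2, mW a.2 b.2)

/-- The crossed product `Z #_ω W` fits into a short exact sequence
`0 → Z → Z #_ω W → W → 0` of Zinbiel algebras: `i(x) = (x,0)` is an injective
homomorphism whose image `Z × {0}` is a two-sided ideal, and `π(x,u) = u` is a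
surjective homomorphism with kernel `Z × {0}`. -/
theorem stmt15 {k Z W : Type*} [Field k] [CharZero k]
    [AddCommGroup Z] [Module k Z] [AddCommGroup W] [Module k W]
    (m : Z →ₗ[k] Z →ₗ[k] Z)
    (hZ : ∀ x y z : Z, m (m x y) z = m x (m y z + m z y))
    (mW : W →ₗ[k] W →ₗ[k] W)
    (hW : ∀ u v w : W, mW (mW u v) w = mW u (mW v w + mW w v))
    (pl : Z →ₗ[k] W →ₗ[k] Z) (pr : W →ₗ[k] Z →ₗ[k] Z)
    (ω : W →ₗ[k] W →ₗ[k] Z)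
    -- crossed system: the crossed product is a Zinbiel algebra
    (hcs : ∀ a b c : Z × W,
      cMul m mW pl pr ω (cMul m mW pl pr ω a b) c =
        cMul m mW pl pr ω a (cMul m mW pl pr ω b c + cMul m mW pl pr ω c b)) :
    -- i is a Zinbiel algebra homomorphism
    (∀ x y : Z, cMul m mW pl pr ω (x, 0) (y, 0) = (m x y, 0)) ∧
    -- i is injective
    Function.Injective (fun x : Z => ((x, 0) : Z × W)) ∧
    -- Z × {0} is a two-sided ideal of Z #_ω W
    (∀ a : Z × W, ∀ b ∈ LinearMap.range (LinearMap.inl k Z W),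
      cMul m mW pl pr ω a b ∈ LinearMap.range (LinearMap.inl k Z W) ∧
      cMul m mW pl pr ω b a ∈ LinearMap.range (LinearMap.inl k Z W)) ∧
    -- π is a surjective Zinbiel algebra homomorphism
    Function.Surjective (Prod.snd : Z × W → W) ∧
    (∀ a b : Z × W, (cMul m mW pl pr ω a b).2 = mW a.2 b.2) ∧
    -- with kernel Z × {0}
    (∀ a : Z × W, a.2 = 0 ↔ a ∈ LinearMap.range (LinearMap.inl k Z W)) := by
  refine ⟨?_, ?_, ?_, ?_, ?_, ?_⟩
  · intro x y; simp [cMul]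
  · intro x y h; exact (Prod.mk.injEq _ _ _ _ ▸ h).1
  · rintro a b ⟨x, rfl⟩
    constructor
    · exact ⟨m a.1 x + pr a.2 x, by simp [cMul]⟩
    · exact ⟨m x a.1 + pl x a.2, by simp [cMul]⟩
  · exact fun u => ⟨(0, u), rfl⟩
  · intro a b; rfl
  · intro a
    constructor
    · intro h; exact ⟨a.1, by simp [Prod.ext_iff, h.symm]⟩
    · rintro ⟨x, rfl⟩; rfl
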